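/- Under Assumption 1, the chopped AP-signal is a signal word: for all n ∈ ℤ≥0 and p ∈ AP, ⟨ς⟩_τ(n)(p) ∈ {A, E} if and only if ⟨ς⟩_τ(n+1)(p) ∈ {A, Z}. Equivalently, p holds at time (n+1)τ iff the observation in slice n is A or E, iff the observation in slice n+1 is A or Z. -/
import Mathlib


/-- The four observation patterns of an atomic proposition on a time interval. -/
inductive Obs where
  | A | Z | E | N
deriving DecidableEq

/-- `obsOf f a b o` : the truth pattern of the (time-indexed) property `f`
on the closed interval `[a, b]` is classified by the observation `o`. -/
def obsOf (f : ℝ → Prop) (a b : ℝ) : Obs → Prop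
  | .A => ∀ t, a ≤ t → t ≤ b → f t
  | .N => ∀ t, a ≤ t → t ≤ b → ¬ f t
  | .Z => ∃ c, a ≤ c ∧ c < b ∧ (∀ t, a ≤ t → t ≤ c → f t) ∧ (∀ t, c < t → t ≤ b → ¬ f t)
  | .E => ∃ c, a ≤ c ∧ c < b ∧ (∀ t, a ≤ t → t ≤ c → ¬ f t) ∧ (∀ t, c < t → t ≤ b → f t)

/-- Assumption 1 of the paper: (1) no double boundary crossing of any AP region
within time `τ`, and (2) at most one atomic proposition changes value across any
interval of length `τ`. -/
def Assumption1 {AP : Type} (ς : ℝ → AP → Bool) (τ : ℝ) : Prop :=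
  (∀ (p : AP) (t : ℝ), 0 ≤ t → ∀ t', 0 ≤ t' → t' ≤ τ →
      ς t p = ς (t + t') p → ∀ t'', 0 ≤ t'' → t'' ≤ t' → ς t p = ς (t + t'') p) ∧
  (∀ (p p' : AP) (t : ℝ), 0 ≤ t →
      ς t p ≠ ς (t + τ) p → ς t p' ≠ ς (t + τ) p' → p = p')

/-- Under Assumption 1, the chopped AP-signal is a signal word: the observation
of `p` in slice `n` is in `{A, E}` iff the observation in slice `n + 1` is in
`{A, Z}`; equivalently, `p` holds at time `(n+1)τ` iff the observation in slice
`n` is `A` or `E`. -/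
theorem chopping_is_signal_word {AP : Type} (ς : ℝ → AP → Bool) (τ : ℝ)
    (hτ : 0 < τ) (h1 : Assumption1 ς τ) (n : ℕ) (p : AP) (o o' : Obs)
    (ho : obsOf (fun t => ς t p = true) ((n : ℝ) * τ) (((n : ℝ) + 1) * τ) o)
    (ho' : obsOf (fun t => ς t p = true) (((n : ℝ) + 1) * τ) (((n : ℝ) + 2) * τ) o') :
    ((o = .A ∨ o = .E) ↔ (o' = .A ∨ o' = .Z)) ∧
    (ς (((n : ℝ) + 1) * τ) p = true ↔ (o = .A ∨ o = .E)) := by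
  set b := ((n : ℝ) + 1) * τ with hb
  have hnn : (0:ℝ) ≤ (n:ℝ) := Nat.cast_nonneg n
  have hab : (n : ℝ) * τ ≤ b := by nlinarith
  have hbc : b ≤ ((n : ℝ) + 2) * τ := by nlinarith
  have P1 : ς b p = true ↔ (o = .A ∨ o = .E) := by
    cases o with
    | A => exact ⟨fun _ => Or.inl rfl, fun _ => ho b hab le_rfl⟩
    | E =>
      obtain ⟨c, _, hcb, _, hp⟩ := ho
      exact ⟨fun _ => Or.inr rfl, fun _ => hp b hcb le_rfl⟩
    | Z =>
      obtain ⟨c, _, hcb, _, hn⟩ := ho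
      exact ⟨fun h => absurd h (hn b hcb le_rfl), fun h => by rcases h with h | h <;> exact Obs.noConfusion h⟩
    | N =>
      exact ⟨fun h => absurd h (ho b hab le_rfl), fun h => by rcases h with h | h <;> exact Obs.noConfusion h⟩
  have P2 : ς b p = true ↔ (o' = .A ∨ o' = .Z) := by
    cases o' with
    | A => exact ⟨fun _ => Or.inl rfl, fun _ => ho' b le_rfl hbc⟩
    | Z =>
      obtain ⟨c, hbc', _, hp, _⟩ := ho'
      exact ⟨fun _ => Or.inr rfl, fun _ => hp b le_rfl hbc'⟩
    | E =>
      obtain ⟨c, hbc', _, hn, _⟩ := ho'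
      exact ⟨fun h => absurd h (hn b le_rfl hbc'), fun h => by rcases h with h | h <;> exact Obs.noConfusion h⟩
    | N =>
      exact ⟨fun h => absurd h (ho' b le_rfl hbc), fun h => by rcases h with h | h <;> exact Obs.noConfusion h⟩
  exact ⟨P1.symm.trans P2, P1⟩
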